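/- Let (X,f) be a TDS, φ, ψ ∈ C(X,ℝ) with ψ > 0. If ε > 0 and δ > 0 satisfy: d(x,y) ≤ δ/2 implies |φ(x) − φ(y)| < ε, then for all T > 0, Q_{ψ,T}(f,φ,δ/2) ≥ exp(−(T/m + 1)ε) · P_{ψ,T}(f,φ,δ), where m = min ψ. -/
import Mathlib


open MeasureTheory Filter Topology Set

variable {X : Type*}

/-- Birkhoff sum `S_n φ (x) = ∑_{i<n} φ(f^i x)`. -/
noncomputable def birkhoff (f : X → X) (φ : X → ℝ) (n : ℕ) (x : X) : ℝ :=
  ∑ i ∈ Finset.range n, φ (f^[i] x)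

/-- The `n`-th Bowen metric. -/
noncomputable def dynDist [MetricSpace X] (f : X → X) (n : ℕ) (x y : X) : ℝ :=
  ⨆ i : Fin n, dist (f^[(i : ℕ)] x) (f^[(i : ℕ)] y)

/-- `F` is an `(n,ε)`-spanning set of `Z`. -/
def IsSpanningSet [MetricSpace X] (f : X → X) (n : ℕ) (ε : ℝ) (Z : Set X) (F : Finset X) : Prop :=
  ∀ y ∈ Z, ∃ x ∈ F, dynDist f n x y ≤ ε

/-- `E` is `(n,ε)`-separated. -/
def IsSeparatedSet [MetricSpace X] (f : X → X) (n : ℕ) (ε : ℝ) (E : Finset X) : Prop :=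
  ∀ x ∈ E, ∀ y ∈ E, x ≠ y → ε < dynDist f n x y

/-- `S_T = {n : ∃ x, S_n ψ(x) ≤ T < S_{n+1} ψ(x)}`. -/
def STset (f : X → X) (ψ : X → ℝ) (T : ℝ) : Set ℕ :=
  {n | ∃ x : X, birkhoff f ψ n x ≤ T ∧ T < birkhoff f ψ (n + 1) x}

/-- `X_n = {x : S_n ψ(x) ≤ T < S_{n+1} ψ(x)}`. -/
def Xset (f : X → X) (ψ : X → ℝ) (T : ℝ) (n : ℕ) : Set X :=
  {x | birkhoff f ψ n x ≤ T ∧ T < birkhoff f ψ (n + 1) x}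

/-- `Q_{ψ,T}(f,φ,ε)`, the spanning-set quantity. -/
noncomputable def Qspan [MetricSpace X] (f : X → X) (φ ψ : X → ℝ) (T ε : ℝ) : ℝ :=
  sInf { r : ℝ | ∃ F : ℕ → Finset X,
    (∀ n ∈ STset f ψ T, IsSpanningSet f n ε (Xset f ψ T n) (F n)) ∧
    r = ∑' n : ℕ, Set.indicator (STset f ψ T)
        (fun n => ∑ x ∈ F n, Real.exp (birkhoff f φ n x)) n }

/-- `P_{ψ,T}(f,φ,ε)`, the separated-set quantity. -/
noncomputable def Psep [MetricSpace X] (f : X → X) (φ ψ : X → ℝ) (T ε : ℝ) : ℝ :=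
  sSup { r : ℝ | ∃ E : ℕ → Finset X,
    (∀ n ∈ STset f ψ T, (E n : Set X) ⊆ Xset f ψ T n ∧ IsSeparatedSet f n ε (E n)) ∧
    r = ∑' n : ℕ, Set.indicator (STset f ψ T)
        (fun n => ∑ x ∈ E n, Real.exp (birkhoff f φ n x)) n }

/-- The `ψ`-induced topological pressure of `φ`. -/
noncomputable def inducedPressure [MetricSpace X] (f : X → X) (φ ψ : X → ℝ) : EReal :=
  ⨆ (ε : ℝ) (_ : 0 < ε),
    Filter.limsup (fun T : ℝ => ((T⁻¹ * Real.log (Qspan f φ ψ T ε) : ℝ) : EReal)) atTop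

/-- Largest sum over `(n,ε)`-separated sets of `X`. -/
noncomputable def sepSum [MetricSpace X] (f : X → X) (φ : X → ℝ) (n : ℕ) (ε : ℝ) : ℝ :=
  sSup { r : ℝ | ∃ E : Finset X, IsSeparatedSet f n ε E ∧
    r = ∑ x ∈ E, Real.exp (birkhoff f φ n x) }

/-- The classical (Walters) topological pressure. -/
noncomputable def topPressure [MetricSpace X] (f : X → X) (φ : X → ℝ) : EReal :=
  ⨆ (ε : ℝ) (_ : 0 < ε),
    Filter.limsup (fun n : ℕ => (((n : ℝ)⁻¹ * Real.log (sepSum f φ n ε) : ℝ) : EReal)) atTop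

section Aux

variable [MetricSpace X]

lemma dynDist_nonneg (f : X → X) (n : ℕ) (x y : X) : 0 ≤ dynDist f n x y :=
  Real.iSup_nonneg fun _ => dist_nonneg

lemma dist_le_dynDist (f : X → X) {n i : ℕ} (hi : i < n) (x y : X) :
    dist (f^[i] x) (f^[i] y) ≤ dynDist f n x y :=
  le_ciSup (f := fun j : Fin n => dist (f^[(j:ℕ)] x) (f^[(j:ℕ)] y))
    (Set.Finite.bddAbove (Set.finite_range _)) (⟨i, hi⟩ : Fin n)

lemma dynDist_triangle (f : X → X) (n : ℕ) (x y z : X) :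
    dynDist f n x z ≤ dynDist f n x y + dynDist f n y z := by
  refine Real.iSup_le (fun i => ?_)
    (add_nonneg (dynDist_nonneg f n x y) (dynDist_nonneg f n y z))
  exact (dist_triangle _ (f^[(i:ℕ)] y) _).trans
    (add_le_add (dist_le_dynDist f i.2 x y) (dist_le_dynDist f i.2 y z))

lemma exists_spanning [CompactSpace X] (f : X → X) (hf : Continuous f) (n : ℕ)
    {r : ℝ} (hr : 0 < r) : ∃ F : Finset X, ∀ y : X, ∃ x ∈ F, dynDist f n x y ≤ r := by
  obtain ⟨t, ht⟩ := isCompact_univ.elim_finite_subcover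
    (fun x : X => ⋂ i : Fin n, (f^[(i:ℕ)]) ⁻¹' Metric.ball (f^[(i:ℕ)] x) r)
    (fun x => isOpen_iInter_of_finite fun i =>
      (Metric.isOpen_ball).preimage (hf.iterate _))
    (fun y _ => Set.mem_iUnion.2 ⟨y, Set.mem_iInter.2 fun i => by
      simp [Metric.mem_ball, hr]⟩)
  refine ⟨t, fun y => ?_⟩
  obtain ⟨x, hx, hy⟩ := Set.mem_iUnion₂.1 (ht (Set.mem_univ y))
  refine ⟨x, hx, Real.iSup_le (fun i => ?_) hr.le⟩
  have := Set.mem_iInter.1 hy i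
  rw [Set.mem_preimage, Metric.mem_ball] at this
  rw [dist_comm]
  exact this.le

lemma birkhoff_le_of_dynDist {f : X → X} {φ : X → ℝ} {n : ℕ} {ε δ : ℝ}
    (hmod : ∀ x y : X, dist x y ≤ δ / 2 → |φ x - φ y| < ε)
    {x y : X} (h : dynDist f n y x ≤ δ / 2) :
    birkhoff f φ n x ≤ n * ε + birkhoff f φ n y := by
  have : birkhoff f φ n x - birkhoff f φ n y ≤ n * ε := by
    rw [birkhoff, birkhoff, ← Finset.sum_sub_distrib]
    calc ∑ i ∈ Finset.range n, (φ (f^[i] x) - φ (f^[i] y))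
        ≤ ∑ _i ∈ Finset.range n, ε := by
          refine Finset.sum_le_sum fun i hi => ?_
          have hd : dist (f^[i] x) (f^[i] y) ≤ δ / 2 := by
            rw [dist_comm]
            exact (dist_le_dynDist f (Finset.mem_range.1 hi) y x).trans h
          exact (le_abs_self _).trans (hmod _ _ hd).le
      _ = n * ε := by simp [mul_comm]
  linarith

lemma key_sum_le (f : X → X) (φ : X → ℝ) (n : ℕ) {ε δ : ℝ} (hδ : 0 < δ)
    (hmod : ∀ x y : X, dist x y ≤ δ / 2 → |φ x - φ y| < ε)
    (Z : Set X) (E F : Finset X) (hEZ : (E : Set X) ⊆ Z)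
    (hsep : IsSeparatedSet f n δ E) (hspan : IsSpanningSet f n (δ/2) Z F) :
    ∑ x ∈ E, Real.exp (birkhoff f φ n x)
      ≤ Real.exp (n * ε) * ∑ y ∈ F, Real.exp (birkhoff f φ n y) := by
  classical
  have hex : ∀ x ∈ E, ∃ y ∈ F, dynDist f n y x ≤ δ / 2 := fun x hx =>
    hspan x (hEZ hx)
  set g : X → X := fun x =>
    if h : ∃ y ∈ F, dynDist f n y x ≤ δ / 2 then h.choose else x with hg
  have hgF : ∀ x ∈ E, g x ∈ F ∧ dynDist f n (g x) x ≤ δ / 2 := by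
    intro x hx
    have h := hex x hx
    simp only [hg, dif_pos h]
    exact ⟨h.choose_spec.1, h.choose_spec.2⟩
  have hinj : ∀ x₁ ∈ E, ∀ x₂ ∈ E, g x₁ = g x₂ → x₁ = x₂ := by
    intro x₁ h₁ x₂ h₂ heq
    by_contra hne
    have hlt := hsep x₁ h₁ x₂ h₂ hne
    have : dynDist f n x₁ x₂ ≤ δ := by
      have h3 := dynDist_triangle f n x₁ (g x₁) x₂
      have h4 : dynDist f n x₁ (g x₁) ≤ δ / 2 := by
        have := (hgF x₁ h₁).2
        have hcomm : dynDist f n x₁ (g x₁) = dynDist f n (g x₁) x₁ := by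
          simp [dynDist, dist_comm]
        rw [hcomm]; exact this
      have h5 : dynDist f n (g x₁) x₂ ≤ δ / 2 := heq ▸ (hgF x₂ h₂).2
      linarith
    linarith
  calc ∑ x ∈ E, Real.exp (birkhoff f φ n x)
      ≤ ∑ x ∈ E, Real.exp (n * ε) * Real.exp (birkhoff f φ n (g x)) := by
        refine Finset.sum_le_sum fun x hx => ?_
        rw [← Real.exp_add]
        exact Real.exp_le_exp.2 (birkhoff_le_of_dynDist hmod (hgF x hx).2)
    _ = Real.exp (n * ε) * ∑ x ∈ E, Real.exp (birkhoff f φ n (g x)) := by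
        rw [Finset.mul_sum]
    _ = Real.exp (n * ε) * ∑ y ∈ E.image g, Real.exp (birkhoff f φ n y) := by
        rw [Finset.sum_image hinj]
    _ ≤ Real.exp (n * ε) * ∑ y ∈ F, Real.exp (birkhoff f φ n y) := by
        refine mul_le_mul_of_nonneg_left ?_ (Real.exp_pos _).le
        refine Finset.sum_le_sum_of_subset_of_nonneg ?_
          (fun _ _ _ => (Real.exp_pos _).le)
        intro y hy
        obtain ⟨x, hx, rfl⟩ := Finset.mem_image.1 hy
        exact (hgF x hx).1

end Aux

/-- if `δ/2` is a modulus of `ε`-continuity for `φ`, then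
`Q_{ψ,T}(f,φ,δ/2) ≥ exp(-(T/m + 1)ε) ⬝ P_{ψ,T}(f,φ,δ)`. -/
theorem stmt5 [MetricSpace X] [CompactSpace X] [Nonempty X]
    (f : X → X) (φ ψ : X → ℝ) (hf : Continuous f) (hφ : Continuous φ) (hψ : Continuous ψ)
    (hpos : ∀ x, 0 < ψ x) (m : ℝ) (hm : IsLeast (Set.range ψ) m)
    (ε δ : ℝ) (hε : 0 < ε) (hδ : 0 < δ)
    (hmod : ∀ x y : X, dist x y ≤ δ / 2 → |φ x - φ y| < ε) :
    ∀ T : ℝ, 0 < T →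
      Real.exp (-(T / m + 1) * ε) * Psep f φ ψ T δ ≤ Qspan f φ ψ T (δ / 2) := by
  intro T hT
  classical
  obtain ⟨x₀, hx₀⟩ := hm.1
  have hm0 : 0 < m := hx₀ ▸ hpos x₀
  have hST : ∀ n ∈ STset f ψ T, (n : ℝ) * m ≤ T := by
    rintro n ⟨x, h1, _⟩
    refine le_trans ?_ h1
    calc (n:ℝ) * m = ∑ _i ∈ Finset.range n, m := by simp [mul_comm]
      _ ≤ birkhoff f ψ n x := Finset.sum_le_sum fun i _ => hm.2 ⟨_, rfl⟩
  have hSTdiv : ∀ n ∈ STset f ψ T, (n:ℝ) ≤ T / m := fun n hn =>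
    (le_div_iff₀ hm0).2 (hST n hn)
  set N := ⌊T / m⌋₊ + 1 with hN
  have hSTN : ∀ n ∈ STset f ψ T, n < N := fun n hn =>
    Nat.lt_succ_of_le (Nat.le_floor (hSTdiv n hn))
  have hsumm : ∀ g : ℕ → ℝ, Summable (Set.indicator (STset f ψ T) g) := fun g =>
    summable_of_ne_finset_zero (s := Finset.range N) fun n hn =>
      Set.indicator_of_notMem (fun h => hn (Finset.mem_range.2 (hSTN n h))) g
  choose F0 hF0 using fun n => exists_spanning f hf n (r := δ / 2) (by linarith)
  rw [Qspan]
  refine le_csInf ⟨_, F0, fun n _ y _ => hF0 n y, rfl⟩ ?_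
  rintro q ⟨F, hF, rfl⟩
  rw [neg_mul, Real.exp_neg, inv_mul_le_iff₀ (Real.exp_pos _)]
  rw [Psep]
  refine csSup_le ⟨0, fun _ => (∅ : Finset X),
    fun n _ => ⟨by simp, fun x hx => by simp at hx⟩, by simp⟩ ?_
  rintro r ⟨E, hE, rfl⟩
  rw [← tsum_mul_left]
  refine Summable.tsum_le_tsum ?_ (hsumm _) ((hsumm _).mul_left _)
  intro n
  by_cases hn : n ∈ STset f ψ T
  · rw [Set.indicator_of_mem hn, Set.indicator_of_mem hn]
    obtain ⟨hEX, hEsep⟩ := hE n hn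
    have h1 := key_sum_le f φ n hδ hmod (Xset f ψ T n) (E n) (F n) hEX hEsep (hF n hn)
    refine h1.trans (mul_le_mul_of_nonneg_right ?_
      (Finset.sum_nonneg fun _ _ => (Real.exp_pos _).le))
    exact Real.exp_le_exp.2 (mul_le_mul_of_nonneg_right
      ((hSTdiv n hn).trans (by linarith)) hε.le)
  · rw [Set.indicator_of_notMem hn, Set.indicator_of_notMem hn]
    simp
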